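/- Let F₀, s : ℝ² → ℝ be continuously differentiable. Then the frequency map ω = (ω₁, ω₂) satisfies lim_{H → 0, H ∈ P} ω(H) = (∂F₀/∂H₁(0), 0), where the limit is taken along points of the slit plane P tending to the origin. -/

import Mathlib

open Real Filter Topology MeasureTheory

/-- The Euclidean norm `|H| = √(H₁² + H₂²)` on `ℝ²`. -/
noncomputable def nrm (H : ℝ × ℝ) : ℝ := Real.sqrt (H.1 ^ 2 + H.2 ^ 2)

/-- The slit plane `P = ℝ² \ {(t,0) : t ≥ 0}`. -/
def slitP : Set (ℝ × ℝ) := {H | ¬ (0 ≤ H.1 ∧ H.2 = 0)}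

/-- The branch of the polar angle with values in `(0, 2π)` on the slit plane:
`argS (r cos θ, r sin θ) = θ` for `r > 0`, `θ ∈ (0, 2π)`. -/
noncomputable def argS (H : ℝ × ℝ) : ℝ :=
  Real.pi + Complex.arg (-(H.1 + H.2 * Complex.I))

/-- The partial derivative with respect to the first variable. -/
noncomputable def pd₁ (f : ℝ × ℝ → ℝ) (H : ℝ × ℝ) : ℝ := fderiv ℝ f H (1, 0)

/-- The partial derivative with respect to the second variable. -/
noncomputable def pd₂ (f : ℝ × ℝ → ℝ) (H : ℝ × ℝ) : ℝ := fderiv ℝ f H (0, 1)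

/-- `D(H) = (1/(2π))(ln|H| + 1) + ∂s/∂H₂(H)`. -/
noncomputable def Dfun (s : ℝ × ℝ → ℝ) (H : ℝ × ℝ) : ℝ :=
  (1 / (2 * Real.pi)) * (Real.log (nrm H) + 1) + pd₂ s H

/-- First component of the frequency map. -/
noncomputable def ω₁ (F₀ s : ℝ × ℝ → ℝ) (H : ℝ × ℝ) : ℝ :=
  pd₁ F₀ H - pd₂ F₀ H * ((1 / (2 * Real.pi)) * argS H + pd₁ s H) / Dfun s H

/-- Second component of the frequency map. -/
noncomputable def ω₂ (F₀ s : ℝ × ℝ → ℝ) (H : ℝ × ℝ) : ℝ :=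
  pd₂ F₀ H / Dfun s H

/-- If `F₀` and `s` are C¹, then `ω(H) → (∂F₀/∂H₁(0), 0)` as `H → 0` within the slit
plane. -/
theorem stmt5 (F₀ s : ℝ × ℝ → ℝ) (hF : ContDiff ℝ 1 F₀) (hs : ContDiff ℝ 1 s) :
    Tendsto (fun H : ℝ × ℝ => (ω₁ F₀ s H, ω₂ F₀ s H)) (𝓝[slitP] (0, 0))
      (𝓝 (pd₁ F₀ (0, 0), 0)) := by
  set L := 𝓝[slitP] ((0, 0) : ℝ × ℝ) with hL
  -- continuity of partial derivatives
  have hpd : ∀ (f : ℝ × ℝ → ℝ), ContDiff ℝ 1 f → ∀ v : ℝ × ℝ,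
      Tendsto (fun H => fderiv ℝ f H v) L (𝓝 (fderiv ℝ f (0, 0) v)) := by
    intro f hf v
    have hc : Continuous (fun H => fderiv ℝ f H v) :=
      (hf.continuous_fderiv one_ne_zero).clm_apply continuous_const
    exact (hc.continuousAt.tendsto).mono_left nhdsWithin_le_nhds
  -- nrm tends to 0 from the right
  have hnrm : Tendsto nrm L (𝓝[>] 0) := by
    rw [tendsto_nhdsWithin_iff]
    constructor
    · have hc : Continuous nrm := by
        unfold nrm; fun_prop
      have := (hc.continuousAt (x := ((0, 0) : ℝ × ℝ))).tendsto
      simpa [nrm] using this.mono_left nhdsWithin_le_nhds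
    · filter_upwards [self_mem_nhdsWithin] with H hH
      have hne : H ≠ ((0, 0) : ℝ × ℝ) := by
        rintro rfl; exact hH ⟨le_refl 0, rfl⟩
      have hpos : 0 < H.1 ^ 2 + H.2 ^ 2 := by
        by_contra hc
        push_neg at hc
        have h1 : H.1 = 0 := by nlinarith [sq_nonneg H.1, sq_nonneg H.2]
        have h2 : H.2 = 0 := by nlinarith [sq_nonneg H.1, sq_nonneg H.2]
        exact hne (Prod.ext h1 h2)
      exact Real.sqrt_pos.2 hpos
  have hlog : Tendsto (fun H => Real.log (nrm H)) L atBot :=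
    Real.tendsto_log_nhdsGT_zero.comp hnrm
  -- Dfun tends to atBot
  have hDbot : Tendsto (Dfun s) L atBot := by
    have hps : Tendsto (pd₂ s) L (𝓝 (pd₂ s (0, 0))) := hpd s hs (0, 1)
    have hbd : ∀ᶠ H in L, Dfun s H ≤
        (1 / (2 * Real.pi)) * (Real.log (nrm H) + 1) + (pd₂ s (0, 0) + 1) := by
      filter_upwards [hps.eventually_lt_const (lt_add_one _)] with H hH
      unfold Dfun; linarith
    apply tendsto_atBot_mono' L hbd
    apply tendsto_atBot_add_const_right
    apply Tendsto.const_mul_atBot (by positivity : (0:ℝ) < 1 / (2 * Real.pi))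
    exact tendsto_atBot_add_const_right _ _ hlog
  have hDinv : Tendsto (fun H => (Dfun s H)⁻¹) L (𝓝 0) := by
    have h1 : Tendsto (fun H => -Dfun s H) L atTop := tendsto_neg_atBot_atTop.comp hDbot
    have h2 := h1.inv_tendsto_atTop
    have h3 : Tendsto (fun H => -(-Dfun s H)⁻¹) L (𝓝 (-0)) := h2.neg
    simp only [inv_neg, neg_neg, neg_zero] at h3
    exact h3
  -- argS bound
  have hargS : ∀ H : ℝ × ℝ, |argS H| ≤ 2 * Real.pi := by
    intro H
    have h1 := Complex.abs_arg_le_pi (-(H.1 + H.2 * Complex.I))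
    have h2 := Real.pi_pos
    unfold argS
    rw [abs_le] at h1 ⊢
    constructor <;> [linarith [h1.1]; linarith [h1.2]]
  -- the correction term tends to 0
  have hT : Tendsto (fun H => pd₂ F₀ H * ((1 / (2 * Real.pi)) * argS H + pd₁ s H)
      / Dfun s H) L (𝓝 0) := by
    set A : ℝ := |pd₂ F₀ (0, 0)| + 1
    set B : ℝ := 1 + |pd₁ s (0, 0)| + 1
    have hA : Tendsto (fun H => |pd₂ F₀ H|) L (𝓝 |pd₂ F₀ (0, 0)|) := (hpd F₀ hF (0, 1)).abs
    have hB : Tendsto (fun H => |pd₁ s H|) L (𝓝 |pd₁ s (0, 0)|) := (hpd s hs (1, 0)).abs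
    apply squeeze_zero_norm' (a := fun H => A * B * |(Dfun s H)⁻¹|)
    · filter_upwards [hA.eventually_lt_const (lt_add_one _),
        hB.eventually_lt_const (lt_add_one _)] with H h1 h2
      have hpi := Real.pi_pos
      have hfrac : |(1 / (2 * Real.pi)) * argS H| ≤ 1 := by
        rw [abs_mul]
        have : |(1 / (2 * Real.pi))| = 1 / (2 * Real.pi) := abs_of_pos (by positivity)
        rw [this]
        calc 1 / (2 * Real.pi) * |argS H| ≤ 1 / (2 * Real.pi) * (2 * Real.pi) := by
              apply mul_le_mul_of_nonneg_left (hargS H) (by positivity)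
          _ = 1 := by field_simp
      have hsum : |(1 / (2 * Real.pi)) * argS H + pd₁ s H| ≤ B := by
        calc |(1 / (2 * Real.pi)) * argS H + pd₁ s H|
            ≤ |(1 / (2 * Real.pi)) * argS H| + |pd₁ s H| := abs_add_le _ _
          _ ≤ B := by unfold B; linarith
      have hAB : 0 ≤ A := by unfold A; positivity
      have hBpos : 0 ≤ B := by unfold B; positivity
      rw [div_eq_mul_inv, Real.norm_eq_abs, abs_mul, abs_mul]
      apply mul_le_mul _ le_rfl (abs_nonneg _) (by positivity)
      exact mul_le_mul h1.le hsum (abs_nonneg _) hAB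
    · have := (hDinv.abs.const_mul (A * B))
      simpa using this
  have hω₁ : Tendsto (fun H => ω₁ F₀ s H) L (𝓝 (pd₁ F₀ (0, 0))) := by
    have := (hpd F₀ hF (1, 0)).sub hT
    simpa [ω₁, pd₁] using this
  have hω₂ : Tendsto (fun H => ω₂ F₀ s H) L (𝓝 0) := by
    have := (hpd F₀ hF (0, 1)).mul hDinv
    simp only [mul_zero] at this
    have heq : (fun H => ω₂ F₀ s H) = fun H => pd₂ F₀ H * (Dfun s H)⁻¹ := by
      funext H; simp only [ω₂, pd₂, div_eq_mul_inv]
    rw [heq]; exact this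
  exact hω₁.prodMk_nhds hω₂
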